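/- Let f : ℝⁿ → ℝ be a three-times continuously differentiable function such that along every line the restriction s ↦ f(l + s·d) is a quadratic polynomial in s with positive leading coefficient (for all l, d ∈ ℝⁿ with d ≠ 0). Then f has the form f(x) = c + rᵀx + xᵀQx for some c ∈ ℝ, r ∈ ℝⁿ and a positive definite symmetric matrix Q ∈ ℝⁿˣⁿ. -/

import Mathlib

/-!
Along the ray `t ↦ t • x` the function is `a t² + b t + f 0`, so the odd part
`g x = (f x - f (-x)) / 2` is homogeneous of degree one and `h x = (f x + f (-x)) / 2 - f 0` is
homogeneous of degree two, and `h x = a > 0` for `x ≠ 0`. Differentiating `t ↦ g (t • x)` once and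
`t ↦ h (t • x)` twice at `t = 0` shows that `g` is its derivative at the origin and `h` is half its
Hessian there, so `f = f 0 + g + h` is a constant plus a linear form plus a quadratic form, and the
symmetrized Gram matrix of the quadratic form is the required `Q`.
-/

open Matrix

section Homogeneous

variable {E F : Type*} [NormedAddCommGroup E] [NormedSpace ℝ E]
  [NormedAddCommGroup F] [NormedSpace ℝ F]

theorem HasFDerivAt.hasDerivAt_comp_smul_const {g : E → F} {L : E →L[ℝ] F} {x : E} {t : ℝ}
    (hg : HasFDerivAt g L (t • x)) : HasDerivAt (fun s : ℝ => g (s • x)) (L x) t := by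
  have hsmul : HasDerivAt (fun s : ℝ => s • x) x t := by
    simpa using (hasDerivAt_id t).smul_const x
  exact hg.comp_hasDerivAt t hsmul

theorem HasFDerivAt.apply_eq_of_map_smul {g : E → F} {L : E →L[ℝ] F} (hg : HasFDerivAt g L 0)
    {x : E} (hx : ∀ t : ℝ, g (t • x) = t • g x) : L x = g x := by
  have h₁ : HasDerivAt (fun t : ℝ => g (t • x)) (L x) 0 :=
    HasFDerivAt.hasDerivAt_comp_smul_const (by rwa [zero_smul])
  have h₂ : HasDerivAt (fun t : ℝ => g (t • x)) (g x) 0 := by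
    simpa [hx] using (hasDerivAt_id (0 : ℝ)).smul_const (g x)
  exact h₁.unique h₂

theorem fderiv_fderiv_zero_apply_apply_of_map_smul {h : E → F} (hd : Differentiable ℝ h)
    (hd₂ : DifferentiableAt ℝ (fderiv ℝ h) 0) {x : E} (hx : ∀ t : ℝ, h (t • x) = t ^ 2 • h x) :
    fderiv ℝ (fderiv ℝ h) 0 x x = (2 : ℝ) • h x := by
  have hfirst (t : ℝ) : fderiv ℝ h (t • x) x = (2 * t) • h x := by
    have h₂ : HasDerivAt (fun s : ℝ => h (s • x)) ((2 * t) • h x) t := by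
      simpa [hx] using (hasDerivAt_pow 2 t).smul_const (h x)
    exact (hd _).hasFDerivAt.hasDerivAt_comp_smul_const.unique h₂
  have h₁ : HasDerivAt (fun t : ℝ => fderiv ℝ h (t • x) x) (fderiv ℝ (fderiv ℝ h) 0 x x) 0 := by
    have hD : HasFDerivAt (fderiv ℝ h) (fderiv ℝ (fderiv ℝ h) 0) ((0 : ℝ) • x) := by
      rw [zero_smul]; exact hd₂.hasFDerivAt
    simpa using hD.hasDerivAt_comp_smul_const.clm_apply (hasDerivAt_const 0 x)
  have h₂ : HasDerivAt (fun t : ℝ => fderiv ℝ h (t • x) x) ((2 : ℝ) • h x) 0 := by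
    simpa [hfirst] using ((hasDerivAt_id (0 : ℝ)).const_mul 2).smul_const (h x)
  exact h₁.unique h₂

end Homogeneous

section EuclideanSpace

variable {ι : Type*} [Fintype ι]

theorem EuclideanSpace.exists_dotProduct_eq (L : EuclideanSpace ℝ ι →L[ℝ] ℝ) :
    ∃ r : EuclideanSpace ℝ ι, ∀ x : EuclideanSpace ℝ ι, r.ofLp ⬝ᵥ x.ofLp = L x := by
  refine ⟨(InnerProductSpace.toDual ℝ _).symm L, fun x => ?_⟩
  rw [← InnerProductSpace.toDual_symm_apply, EuclideanSpace.inner_eq_star_dotProduct, star_trivial,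
    dotProduct_comm]

theorem Matrix.exists_isSymm_dotProduct_mulVec_eq [DecidableEq ι]
    (B : (ι → ℝ) →ₗ[ℝ] (ι → ℝ) →ₗ[ℝ] ℝ) :
    ∃ Q : Matrix ι ι ℝ, Q.IsSymm ∧ ∀ x : ι → ℝ, x ⬝ᵥ (Q *ᵥ x) = B x x := by
  set M := LinearMap.toMatrix₂' ℝ B
  refine ⟨(1 / 2 : ℝ) • (M + Mᵀ), ?_, fun x => ?_⟩
  · simp [IsSymm, transpose_add, add_comm]
  · have hM : x ⬝ᵥ (M *ᵥ x) = B x x := by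
      rw [← Matrix.toLinearMap₂'_apply', Matrix.toLinearMap₂'_toMatrix']
    have hMt : x ⬝ᵥ (Mᵀ *ᵥ x) = x ⬝ᵥ (M *ᵥ x) := by
      rw [mulVec_transpose, dotProduct_comm, dotProduct_mulVec]
    rw [smul_mulVec, add_mulVec, dotProduct_smul, dotProduct_add, hMt, hM, smul_eq_mul]
    ring

theorem EuclideanSpace.exists_isSymm_dotProduct_mulVec_eq [DecidableEq ι]
    (B : EuclideanSpace ℝ ι →L[ℝ] EuclideanSpace ℝ ι →L[ℝ] ℝ) :
    ∃ Q : Matrix ι ι ℝ, Q.IsSymm ∧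
      ∀ x : EuclideanSpace ℝ ι, x.ofLp ⬝ᵥ (Q *ᵥ x.ofLp) = B x x := by
  let e := (WithLp.linearEquiv 2 ℝ (ι → ℝ)).symm.toLinearMap
  obtain ⟨Q, hQ, hQB⟩ := Matrix.exists_isSymm_dotProduct_mulVec_eq
    ((ContinuousLinearMap.toLinearMap₁₂ B).compl₁₂ e e)
  exact ⟨Q, hQ, fun x => hQB x.ofLp⟩

end EuclideanSpace

section Rays

variable {E : Type*} [NormedAddCommGroup E] [NormedSpace ℝ E]

noncomputable def oddPart (f : E → ℝ) (x : E) : ℝ := (f x - f (-x)) / 2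

noncomputable def evenPart (f : E → ℝ) (x : E) : ℝ := (f x + f (-x)) / 2

theorem evenPart_sub_eq_of_apply_smul {f : E → ℝ} {x : E} {a b : ℝ}
    (hx : ∀ t : ℝ, f (t • x) = a * t ^ 2 + b * t + f 0) : evenPart f x - f 0 = a := by
  have h₁ := hx 1
  have h₂ := hx (-1)
  rw [one_smul] at h₁
  rw [neg_smul, one_smul] at h₂
  rw [evenPart, h₁, h₂]
  ring

theorem oddPart_eq_of_apply_smul {f : E → ℝ} {x : E} {a b : ℝ}
    (hx : ∀ t : ℝ, f (t • x) = a * t ^ 2 + b * t + f 0) : oddPart f x = b := by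
  have h₁ := hx 1
  have h₂ := hx (-1)
  rw [one_smul] at h₁
  rw [neg_smul, one_smul] at h₂
  rw [oddPart, h₁, h₂]
  ring

def PosQuadraticOnLinesThroughZero (f : E → ℝ) : Prop :=
  ∀ d : E, ‖d‖ = 1 → ∃ a b c : ℝ, 0 < a ∧ ∀ s : ℝ, f (s • d) = a * s ^ 2 + b * s + c

namespace PosQuadraticOnLinesThroughZero

variable {f : E → ℝ}

theorem exists_pos_quadratic_along_ray (hf : PosQuadraticOnLinesThroughZero f) {x : E}
    (hx : x ≠ 0) :
    ∃ a b : ℝ, 0 < a ∧ ∀ t : ℝ, f (t • x) = a * t ^ 2 + b * t + f 0 := by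
  have hnx : ‖x‖ ≠ 0 := norm_ne_zero_iff.mpr hx
  obtain ⟨a, b, c, ha, hq⟩ := hf (‖x‖⁻¹ • x) (by simp [norm_smul, hnx])
  have hc : f 0 = c := by simpa using hq 0
  refine ⟨a * ‖x‖ ^ 2, b * ‖x‖, by positivity, fun t => ?_⟩
  have hs : (t * ‖x‖) • ‖x‖⁻¹ • x = t • x := by rw [smul_smul, mul_inv_cancel_right₀ hnx]
  rw [← hs, hq, hc]
  ring

theorem apply_smul_eq_evenPart_oddPart (hf : PosQuadraticOnLinesThroughZero f) (x : E) (t : ℝ) :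
    f (t • x) = t ^ 2 * (evenPart f x - f 0) + t * oddPart f x + f 0 := by
  rcases eq_or_ne x 0 with rfl | hx
  · simp [evenPart, oddPart]
  obtain ⟨a, b, -, hq⟩ := hf.exists_pos_quadratic_along_ray hx
  rw [hq, evenPart_sub_eq_of_apply_smul hq, oddPart_eq_of_apply_smul hq]
  ring

theorem oddPart_smul (hf : PosQuadraticOnLinesThroughZero f) (x : E) (t : ℝ) :
    oddPart f (t • x) = t * oddPart f x := by
  rw [oddPart, ← neg_smul, hf.apply_smul_eq_evenPart_oddPart, hf.apply_smul_eq_evenPart_oddPart]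
  ring

theorem evenPart_smul_sub (hf : PosQuadraticOnLinesThroughZero f) (x : E) (t : ℝ) :
    evenPart f (t • x) - f 0 = t ^ 2 * (evenPart f x - f 0) := by
  rw [evenPart, ← neg_smul, hf.apply_smul_eq_evenPart_oddPart, hf.apply_smul_eq_evenPart_oddPart]
  ring

theorem evenPart_sub_pos (hf : PosQuadraticOnLinesThroughZero f) {x : E} (hx : x ≠ 0) :
    0 < evenPart f x - f 0 := by
  obtain ⟨a, _, ha, hq⟩ := hf.exists_pos_quadratic_along_ray hx
  rwa [evenPart_sub_eq_of_apply_smul hq]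

end PosQuadraticOnLinesThroughZero

end Rays

/-- If a C³ function on ℝⁿ restricts to a quadratic with positive leading
coefficient along every line (in every unit direction), then it is a quadratic
form `c + rᵀx + xᵀQx` with `Q` symmetric positive definite. -/
theorem stmt0 (n : ℕ) (f : EuclideanSpace ℝ (Fin n) → ℝ)
    (hf : ContDiff ℝ 3 f)
    (hline : ∀ l d : EuclideanSpace ℝ (Fin n), ‖d‖ = 1 →
      ∃ a b c : ℝ, 0 < a ∧ ∀ s : ℝ, f (l + s • d) = a * s ^ 2 + b * s + c) :
    ∃ (c : ℝ) (r : EuclideanSpace ℝ (Fin n)) (Q : Matrix (Fin n) (Fin n) ℝ),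
      Q.IsSymm ∧ Q.PosDef ∧
      ∀ x : EuclideanSpace ℝ (Fin n),
        f x = c + (fun i => r i) ⬝ᵥ (fun i => x i) +
          (fun i => x i) ⬝ᵥ Q.mulVec (fun i => x i) := by
  have hq : PosQuadraticOnLinesThroughZero f := fun d hd => by simpa using hline 0 d hd
  set g := oddPart f
  set h := fun x => evenPart f x - f 0
  have hg : ContDiff ℝ 1 g := ((hf.sub (hf.comp contDiff_neg)).div_const 2).of_le (by norm_num)
  have hh : ContDiff ℝ 2 h :=
    (((hf.add (hf.comp contDiff_neg)).div_const 2).sub contDiff_const).of_le (by norm_num)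
  obtain ⟨r, hr⟩ := EuclideanSpace.exists_dotProduct_eq (fderiv ℝ g 0)
  obtain ⟨Q, hQ, hQB⟩ :=
    EuclideanSpace.exists_isSymm_dotProduct_mulVec_eq ((1 / 2 : ℝ) • fderiv ℝ (fderiv ℝ h) 0)
  have hrg (x) : r.ofLp ⬝ᵥ x.ofLp = g x :=
    (hr x).trans <| (hg.differentiable one_ne_zero 0).hasFDerivAt.apply_eq_of_map_smul
      (hq.oddPart_smul x)
  have hQh (x) : x.ofLp ⬝ᵥ (Q *ᵥ x.ofLp) = h x := by
    rw [hQB, _root_.smul_apply, _root_.smul_apply,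
      fderiv_fderiv_zero_apply_apply_of_map_smul (hh.differentiable two_ne_zero)
        ((hh.fderiv_right le_rfl).differentiable one_ne_zero 0) (hq.evenPart_smul_sub x)]
    simp
  refine ⟨f 0, r, Q, hQ, ?_, fun x => ?_⟩
  · refine posDef_iff_dotProduct_mulVec.mpr ⟨isHermitian_iff_isSymm.mpr hQ, fun y hy => ?_⟩
    have hy' : WithLp.toLp 2 y ≠ 0 := by simpa using hy
    rw [star_trivial, ← WithLp.ofLp_toLp 2 y, hQh]
    exact hq.evenPart_sub_pos hy'
  · rw [hrg, hQh]
    simp only [g, h, oddPart, evenPart]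
    ring
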